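/- arXiv:1602.04574 — 4 statements merged into one kernel-verified Lean document; each statement's English description precedes it below -/
import Mathlib

section
/- Let f_{r,s,t}(q) = Σ_{j1+j2=r, j1'+j2'=s, j1+j1'=t} q^{j1·j2'} / ((q)_{j1}(q)_{j2}(q)_{j1'}(q)_{j2'}), where (q)_m = ∏_{i=1}^m (1-q^i) and the sum is over nonnegative integers. Then f_{r,s,t}(q) = f_{s,r,t}(q) for all nonnegative integers r,s,t. -/
open Finset

/-- The q-Pochhammer symbol `(q)_m = ∏_{i=1}^m (1 - q^i)` in `ℚ(q)`. -/
noncomputable def qPoch (q : RatFunc ℚ) (m : ℕ) : RatFunc ℚ :=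
  ∏ i ∈ range m, (1 - q ^ (i + 1))

/-- `f_{r,s,t}(q) = Σ_{j1+j2=r, j1'+j2'=s, j1+j1'=t} q^{j1·j2'} / ((q)_{j1}(q)_{j2}(q)_{j1'}(q)_{j2'})`
with `q = X` the generic variable of `ℚ(q)`. -/
noncomputable def fq (r s t : ℕ) : RatFunc ℚ :=
  ∑ j1 ∈ range (r + 1), ∑ j1' ∈ range (s + 1),
    if j1 + j1' = t then
      (RatFunc.X : RatFunc ℚ) ^ (j1 * (s - j1')) /
        (qPoch RatFunc.X j1 * qPoch RatFunc.X (r - j1) *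
          qPoch RatFunc.X j1' * qPoch RatFunc.X (s - j1'))
    else 0

/-! ### Auxiliary lemmas -/

lemma one_sub_X_pow_ne_zero (n : ℕ) : (1 : RatFunc ℚ) - RatFunc.X ^ (n+1) ≠ 0 := by
  intro h
  have hx : (RatFunc.X : RatFunc ℚ) ^ (n+1) = 1 := (sub_eq_zero.mp h).symm
  have h2 : algebraMap (Polynomial ℚ) (RatFunc ℚ) ((Polynomial.X) ^ (n+1)) =
      algebraMap (Polynomial ℚ) (RatFunc ℚ) 1 := by
    simpa [RatFunc.algebraMap_X] using hx
  have h3 := RatFunc.algebraMap_injective ℚ h2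
  have := congrArg Polynomial.natDegree h3
  simp [Polynomial.natDegree_X_pow] at this

lemma qPoch_ne_zero (m : ℕ) : qPoch RatFunc.X m ≠ 0 := by
  unfold qPoch
  exact Finset.prod_ne_zero_iff.mpr fun i _ => one_sub_X_pow_ne_zero i

lemma qPoch_zero : qPoch RatFunc.X 0 = 1 := rfl

lemma qPoch_succ (m : ℕ) : qPoch RatFunc.X (m+1) = qPoch RatFunc.X m * (1 - RatFunc.X^(m+1)) :=
  Finset.prod_range_succ _ _

/-- The Gaussian binomial coefficient in `ℚ(q)`. -/
noncomputable def Bq (n k : ℕ) : RatFunc ℚ :=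
  if k ≤ n then qPoch RatFunc.X n / (qPoch RatFunc.X k * qPoch RatFunc.X (n - k)) else 0

lemma Bq_of_gt {n k : ℕ} (h : n < k) : Bq n k = 0 := if_neg (by omega)

lemma Bq_zero (n : ℕ) : Bq n 0 = 1 := by
  simp [Bq, qPoch_zero, div_self (qPoch_ne_zero n)]

lemma Bq_self (n : ℕ) : Bq n n = 1 := by
  simp [Bq, qPoch_zero, div_self (qPoch_ne_zero n)]

lemma Bq_pascal (n k : ℕ) :
    Bq (n+1) (k+1) = Bq n (k+1) + RatFunc.X ^ (n-k) * Bq n k := by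
  by_cases h1 : k + 1 ≤ n
  · rw [Bq, if_pos (by omega : k+1 ≤ n+1), Bq, if_pos h1, Bq, if_pos (by omega : k ≤ n)]
    have e1 : n + 1 - (k+1) = n - k := by omega
    have e2 : n - k = (n - k - 1) + 1 := by omega
    have e3 : n - (k+1) = n - k - 1 := by omega
    rw [e1, e3, qPoch_succ n, e2, qPoch_succ (n-k-1), qPoch_succ k, ← e2]
    have hX : (RatFunc.X : RatFunc ℚ)^(n-k) * RatFunc.X^(k+1) = RatFunc.X^(n+1) := by
      rw [← pow_add]; congr 1; omega
    have key : (1:RatFunc ℚ) - RatFunc.X^(n+1)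
        = (1 - RatFunc.X^(n-k)) + RatFunc.X^(n-k)*(1-RatFunc.X^(k+1)) := by
      linear_combination hX
    have hk := qPoch_ne_zero k
    have hn := qPoch_ne_zero n
    have hnk := qPoch_ne_zero (n-k-1)
    have hA := one_sub_X_pow_ne_zero k
    have hC : (1:RatFunc ℚ) - RatFunc.X^(n-k) ≠ 0 := by
      rw [e2]; exact one_sub_X_pow_ne_zero (n-k-1)
    rw [key]
    field_simp
  · by_cases h2 : k = n
    · subst h2
      rw [Bq_self, Bq_of_gt (by omega), Bq_self]
      simp
    · rw [Bq_of_gt (by omega), Bq_of_gt (by omega), Bq_of_gt (by omega)]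
      simp

/-- The q-Vandermonde sum. -/
noncomputable def Sq (r s t : ℕ) : RatFunc ℚ :=
  ∑ j ∈ range (t+1), Bq r j * Bq s (t - j) * RatFunc.X ^ (j * (s - (t - j)))

lemma Sq_t_zero (r s : ℕ) : Sq r s 0 = 1 := by
  simp [Sq, Bq_zero]

lemma Sq_zero_left (s t : ℕ) : Sq 0 s t = Bq s t := by
  unfold Sq
  rw [Finset.sum_range_succ']
  rw [Finset.sum_eq_zero (fun k _ => by rw [Bq_of_gt (Nat.succ_pos k)]; ring)]
  simp [Bq_zero]

/-- q-Vandermonde identity. -/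
lemma Sq_eq (r s t : ℕ) : Sq r s t = Bq (r+s) t := by
  induction r generalizing t with
  | zero => simpa using Sq_zero_left s t
  | succ r ih =>
    cases t with
    | zero => rw [Sq_t_zero, Bq_zero]
    | succ t =>
      have expand : ∀ k ∈ range (t+1),
          Bq (r+1) (k+1) * Bq s (t+1-(k+1)) * RatFunc.X^((k+1)*(s-(t+1-(k+1))))
          = Bq r (k+1) * Bq s (t+1-(k+1)) * RatFunc.X^((k+1)*(s-(t+1-(k+1))))
            + RatFunc.X^(r+s-t) * (Bq r k * Bq s (t-k) * RatFunc.X^(k*(s-(t-k)))) := by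
        intro k hk
        have hkt : k ≤ t := by simpa using Nat.lt_succ_iff.mp (mem_range.mp hk)
        rw [Bq_pascal]
        have e : t+1-(k+1) = t-k := by omega
        rw [e]
        have hterm : RatFunc.X^(r-k) * (Bq r k * Bq s (t-k)) * RatFunc.X^((k+1)*(s-(t-k)))
            = RatFunc.X^(r+s-t) * (Bq r k * Bq s (t-k)) * RatFunc.X^(k*(s-(t-k))) := by
          by_cases hz1 : Bq r k = 0
          · simp [hz1]
          by_cases hz2 : Bq s (t-k) = 0
          · simp [hz2]
          have hk1 : k ≤ r := by by_contra hc; exact hz1 (Bq_of_gt (by omega))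
          have hk2 : t - k ≤ s := by by_contra hc; exact hz2 (Bq_of_gt (by omega))
          set a := s - (t - k) with ha
          set C := Bq r k * Bq s (t-k) with hC
          have h5 : (k+1)*a = k*a + a := by ring
          have hexp : (r-k) + (k+1)*a = (r+s-t) + k*a := by
            rw [h5]
            have h6 : r - k + a = r + s - t := by omega
            omega
          calc RatFunc.X^(r-k) * C * RatFunc.X^((k+1)*a)
              = C * RatFunc.X^((r-k) + (k+1)*a) := by rw [pow_add]; ring
            _ = C * RatFunc.X^((r+s-t) + k*a) := by rw [hexp]
            _ = RatFunc.X^(r+s-t) * C * RatFunc.X^(k*a) := by rw [pow_add]; ring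
        linear_combination hterm
      unfold Sq
      rw [Finset.sum_range_succ']
      rw [Finset.sum_congr rfl expand, Finset.sum_add_distrib, ← Finset.mul_sum]
      have hS : (∑ k ∈ range (t+1), Bq r k * Bq s (t-k) * RatFunc.X^(k*(s-(t-k)))) = Sq r s t := rfl
      have hS1 : Sq r s (t+1) = _ := Finset.sum_range_succ'
        (fun j => Bq r j * Bq s (t+1-j) * RatFunc.X^(j*(s-(t+1-j)))) (t+1)
      rw [show r+1+s = r+s+1 from by omega, Bq_pascal, ← ih (t+1), ← ih t, hS1, hS]
      rw [Bq_zero, Bq_zero]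
      ring

noncomputable def gq (r s j j' : ℕ) : RatFunc ℚ :=
  Bq r j * Bq s j' * RatFunc.X ^ (j * (s - j'))

lemma fq_mul (r s t : ℕ) :
    fq r s t * (qPoch RatFunc.X r * qPoch RatFunc.X s) = Sq r s t := by
  have step1 : fq r s t * (qPoch RatFunc.X r * qPoch RatFunc.X s) =
      ∑ j1 ∈ range (r+1), ∑ j1' ∈ range (s+1),
        if j1 + j1' = t then gq r s j1 j1' else 0 := by
    unfold fq
    rw [Finset.sum_mul]
    refine Finset.sum_congr rfl fun j1 hj1 => ?_
    rw [Finset.sum_mul]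
    refine Finset.sum_congr rfl fun j1' hj1' => ?_
    split_ifs with h
    · have hj1r : j1 ≤ r := by have := mem_range.mp hj1; omega
      have hj1s : j1' ≤ s := by have := mem_range.mp hj1'; omega
      unfold gq
      rw [Bq, if_pos hj1r, Bq, if_pos hj1s]
      have h1 := qPoch_ne_zero j1
      have h2 := qPoch_ne_zero (r - j1)
      have h3 := qPoch_ne_zero j1'
      have h4 := qPoch_ne_zero (s - j1')
      field_simp
    · simp
  rw [step1]
  have inner : ∀ j1, (∑ j1' ∈ range (s+1), if j1 + j1' = t then gq r s j1 j1' else 0)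
      = if j1 ≤ t ∧ t - j1 ≤ s then gq r s j1 (t - j1) else 0 := by
    intro j1
    by_cases hj : j1 ≤ t
    · rw [Finset.sum_congr rfl (fun j1' _ =>
        if_congr (by omega : (j1 + j1' = t) ↔ (j1' = t - j1)) rfl rfl)]
      rw [Finset.sum_ite_eq' (range (s+1)) (t - j1) (gq r s j1)]
      simp only [mem_range]
      split_ifs with h1 h2 h2 <;> first | rfl | omega
    · rw [Finset.sum_eq_zero (fun x _ => if_neg (by omega)), if_neg (by omega)]
  rw [Finset.sum_congr rfl (fun j1 _ => inner j1)]
  have e1 : ∀ j1 ∈ range (r+1),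
      (if j1 ≤ t ∧ t - j1 ≤ s then gq r s j1 (t - j1) else 0)
      = (if j1 ≤ r ∧ j1 ≤ t ∧ t - j1 ≤ s then gq r s j1 (t - j1) else 0) := by
    intro j1 hj1
    have : j1 ≤ r := by have := mem_range.mp hj1; omega
    split_ifs <;> first | rfl | omega
  have e2 : ∀ j ∈ range (t+1),
      Bq r j * Bq s (t - j) * RatFunc.X ^ (j * (s - (t - j)))
      = (if j ≤ r ∧ j ≤ t ∧ t - j ≤ s then gq r s j (t - j) else 0) := by
    intro j hj
    have hjt : j ≤ t := by have := mem_range.mp hj; omega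
    by_cases hc : j ≤ r ∧ t - j ≤ s
    · rw [if_pos ⟨hc.1, hjt, hc.2⟩]; rfl
    · rw [if_neg (by tauto)]
      rcases not_and_or.mp hc with h | h
      · rw [Bq_of_gt (show r < j by omega)]; ring
      · rw [Bq_of_gt (show s < t - j by omega)]; ring
  rw [Finset.sum_congr rfl e1]
  unfold Sq
  rw [Finset.sum_congr rfl e2]
  have E1 : ∑ j ∈ range (r+1), (if j ≤ r ∧ j ≤ t ∧ t - j ≤ s then gq r s j (t - j) else 0)
      = ∑ j ∈ range (r+t+2), (if j ≤ r ∧ j ≤ t ∧ t - j ≤ s then gq r s j (t - j) else 0) := by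
    apply Finset.sum_subset
    · exact Finset.range_subset_range.mpr (by omega)
    · intro x hx hx'
      rw [if_neg (by simp [mem_range] at hx'; omega)]
  have E2 : ∑ j ∈ range (t+1), (if j ≤ r ∧ j ≤ t ∧ t - j ≤ s then gq r s j (t - j) else 0)
      = ∑ j ∈ range (r+t+2), (if j ≤ r ∧ j ≤ t ∧ t - j ≤ s then gq r s j (t - j) else 0) := by
    apply Finset.sum_subset
    · exact Finset.range_subset_range.mpr (by omega)
    · intro x hx hx'
      rw [if_neg (by simp [mem_range] at hx'; omega)]
  rw [E1, ← E2]

theorem fq_symm (r s t : ℕ) : fq r s t = fq s r t := by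
  have hr := qPoch_ne_zero r
  have hs := qPoch_ne_zero s
  have h1 := fq_mul r s t
  have h2 := fq_mul s r t
  rw [Sq_eq] at h1 h2
  rw [show s + r = r + s from by omega] at h2
  have h3 : fq r s t * (qPoch RatFunc.X r * qPoch RatFunc.X s)
      = fq s r t * (qPoch RatFunc.X s * qPoch RatFunc.X r) := h1.trans h2.symm
  rw [mul_comm (qPoch RatFunc.X s)] at h3
  exact mul_right_cancel₀ (mul_ne_zero hr hs) h3
end

section
/- Let a⁺, a⁻, k be the 0-oscillator operators on the Fock space F (a⁺|m⟩=|m+1⟩, a⁻|m⟩=|m−1⟩ with |−1⟩=0, k|m⟩=δ_{m,0}|m⟩). Then the family {(a⁺)^f (a⁻)^g : f,g ∈ ℕ} is linearly independent in End(F). -/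
/-- Creation operator: `a⁺|m⟩ = |m+1⟩`. -/
noncomputable def ap : Module.End ℂ (ℕ →₀ ℂ) :=
  Finsupp.lsum ℂ fun m => Finsupp.lsingle (m + 1)

/-- Annihilation operator: `a⁻|m⟩ = |m-1⟩`, `a⁻|0⟩ = 0`. -/
noncomputable def am : Module.End ℂ (ℕ →₀ ℂ) :=
  Finsupp.lsum ℂ fun m => if m = 0 then 0 else Finsupp.lsingle (m - 1)

lemma ap_single (m : ℕ) (c : ℂ) : ap (Finsupp.single m c) = Finsupp.single (m+1) c := by
  simp [ap]

lemma am_single_succ (m : ℕ) (c : ℂ) :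
    am (Finsupp.single (m+1) c) = Finsupp.single m c := by
  simp [am]

lemma am_single_zero (c : ℂ) : am (Finsupp.single 0 c) = 0 := by
  simp [am]

lemma ap_pow_single (f m : ℕ) (c : ℂ) :
    (ap ^ f) (Finsupp.single m c) = Finsupp.single (m + f) c := by
  induction f with
  | zero => simp
  | succ f ih =>
      rw [pow_succ']
      simp [Module.End.mul_apply, ih, ap_single, Nat.add_comm, Nat.add_assoc, Nat.add_left_comm]

lemma am_pow_single (g m : ℕ) (c : ℂ) :
    (am ^ g) (Finsupp.single (m + g) c) = Finsupp.single m c := by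
  induction g with
  | zero => simp
  | succ g ih =>
      rw [pow_succ, Module.End.mul_apply, show m + (g+1) = (m+g)+1 from rfl,
        am_single_succ, ih]

lemma am_pow_single_lt (g m : ℕ) (c : ℂ) (h : m < g) :
    (am ^ g) (Finsupp.single m c) = 0 := by
  induction m generalizing g with
  | zero =>
      obtain ⟨g', rfl⟩ := Nat.exists_eq_succ_of_ne_zero h.ne'
      rw [pow_succ, Module.End.mul_apply, am_single_zero, map_zero]
  | succ m ih =>
      obtain ⟨g', rfl⟩ := Nat.exists_eq_succ_of_ne_zero (Nat.zero_lt_of_lt h).ne'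
      rw [pow_succ, Module.End.mul_apply, am_single_succ, ih _ (Nat.lt_of_succ_lt_succ h)]

lemma apam_single (f g : ℕ) :
    (ap ^ f) ((am ^ g) (Finsupp.single g (1:ℂ))) = Finsupp.single f 1 := by
  have h := am_pow_single g 0 (1:ℂ)
  rw [Nat.zero_add] at h
  rw [h, ap_pow_single, Nat.zero_add]

set_option maxHeartbeats 1000000 in
/-- The family `{(a⁺)^f (a⁻)^g : f,g ∈ ℕ}` is linearly independent in `End(F)`. -/
theorem zero_oscillator_monomials_linearIndependent :
    LinearIndependent ℂ (fun p : ℕ × ℕ => ap ^ p.1 * am ^ p.2) := by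
  refine (linearIndependent_iff (R := ℂ) (M := Module.End ℂ (ℕ →₀ ℂ))
    (v := fun p : ℕ × ℕ => ap ^ p.1 * am ^ p.2)).mpr ?_
  intro l hl
  have key : ∀ g f, l (f, g) = 0 := by
    intro g
    induction g using Nat.strong_induction_on with
    | _ g IH =>
      intro f
      have h1 := congrArg (fun T : Module.End ℂ (ℕ →₀ ℂ) => T (Finsupp.single g 1)) hl
      simp only [Finsupp.linearCombination_apply] at h1
      rw [LinearMap.finsupp_sum_apply] at h1
      have h2 := congrArg (fun v : ℕ →₀ ℂ => v f) h1
      simp only [LinearMap.smul_apply, Module.End.mul_apply, LinearMap.zero_apply,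
        Finsupp.coe_zero, Pi.zero_apply, Finsupp.sum_apply, Finsupp.smul_apply] at h2
      rw [Finsupp.sum, Finset.sum_eq_single (f, g)] at h2
      · rw [apam_single] at h2
        simpa using h2
      · rintro ⟨f', g'⟩ _ hne
        simp only
        rcases lt_trichotomy g' g with hlt | heq | hgt
        · rw [IH g' hlt f', zero_smul]
        · have hf : f' ≠ f := fun h => hne (by rw [h, heq])
          rw [heq, apam_single]
          simp [Finsupp.single_apply, hf]
        · rw [am_pow_single_lt g' g 1 hgt, map_zero]
          simp
      · intro h
        rw [Finsupp.notMem_support_iff.mp h, zero_smul]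
  ext ⟨f, g⟩
  exact key g f
end

section
/- Define R^{abc}_{ijk} ∈ ℚ(q) as in the paper. Then R^{abc}_{ijk} · (q²)_a (q²)_b (q²)_c = R^{ijk}_{abc} · (q²)_i (q²)_j (q²)_k for all nonnegative integers a,b,c,i,j,k, where (q²)_m = ∏_{l=1}^m(1−q^{2l}). -/
open Finset

/-- `(q²)_m = ∏_{i=1}^m (1 - q^{2i})` in `ℚ(q)` with `q = X`. -/
noncomputable def qp2 (m : ℕ) : RatFunc ℚ :=
  ∏ i ∈ range m, (1 - (RatFunc.X : RatFunc ℚ) ^ (2 * (i + 1)))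

/-- The `q²`-binomial coefficient. -/
noncomputable def qbin (m l : ℕ) : RatFunc ℚ := qp2 m / (qp2 l * qp2 (m - l))

/-- The 3D R-matrix entry `R^{abc}_{ijk}`, eq. (3.6) of the paper. -/
noncomputable def Rmat (a b c i j k : ℕ) : RatFunc ℚ :=
  (if a + b = i + j then 1 else 0) * (if b + c = j + k then 1 else 0) *
    ∑ lam ∈ range (j + 1), ∑ mu ∈ range (i + 1),
      if lam + mu = b then
        (-1 : RatFunc ℚ) ^ lam *
          (RatFunc.X : RatFunc ℚ) ^
            ((i : ℤ) * ((c : ℤ) - (j : ℤ)) + ((k : ℤ) + 1) * (lam : ℤ) +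
              (mu : ℤ) * ((mu : ℤ) - (k : ℤ))) *
          (qp2 (c + mu) / qp2 c) * qbin i mu * qbin j lam
      else 0

lemma qp2_ne_zero (m : ℕ) : qp2 m ≠ 0 := by
  unfold qp2
  apply Finset.prod_ne_zero_iff.mpr
  intro n _
  intro h
  have h1 : (RatFunc.X : RatFunc ℚ) ^ (2 * (n + 1)) = 1 := by
    linear_combination -h
  rw [RatFunc.X, ← map_pow, ← map_one (algebraMap (Polynomial ℚ) (RatFunc ℚ))] at h1
  have := RatFunc.algebraMap_injective ℚ |>.eq_iff.mp h1
  have hd := congrArg Polynomial.natDegree this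
  simp [Polynomial.natDegree_X_pow] at hd

lemma sum_reshape (J I B M : ℕ) (hJ : J ≤ M) (f : ℕ → ℕ → RatFunc ℚ) :
    (∑ l ∈ range (J + 1), ∑ m ∈ range (I + 1), if l + m = B then f l m else 0)
      = ∑ l ∈ range (M + 1),
          if l ≤ J ∧ l ≤ B ∧ B ≤ I + l then f l (B - l) else 0 := by
  have step : ∀ l ∈ range (J + 1),
      (∑ m ∈ range (I + 1), if l + m = B then f l m else 0)
        = if l ≤ J ∧ l ≤ B ∧ B ≤ I + l then f l (B - l) else 0 := by
    intro l hl
    rw [Finset.mem_range] at hl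
    by_cases hlB : l ≤ B
    · have hiff : ∀ m, (l + m = B) ↔ m = B - l := by intro m; omega
      simp_rw [hiff]
      rw [Finset.sum_ite_eq' (range (I + 1))]
      simp only [Finset.mem_range]
      by_cases hBI : B ≤ I + l
      · rw [if_pos (by omega), if_pos ⟨by omega, hlB, hBI⟩]
      · rw [if_neg (by omega), if_neg (by omega)]
    · rw [Finset.sum_eq_zero (fun m _ => by rw [if_neg (by omega)]),
        if_neg (by omega)]
  rw [Finset.sum_congr rfl step]
  apply Finset.sum_subset
  · intro x hx
    rw [Finset.mem_range] at hx ⊢; omega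
  · intro x _ hx
    rw [Finset.mem_range] at hx
    rw [if_neg (by omega)]

/-- `R^{abc}_{ijk} (q²)_a (q²)_b (q²)_c = R^{ijk}_{abc} (q²)_i (q²)_j (q²)_k`. -/
theorem Rmat_transpose (a b c i j k : ℕ) :
    Rmat a b c i j k * (qp2 a * qp2 b * qp2 c)
      = Rmat i j k a b c * (qp2 i * qp2 j * qp2 k) := by
  unfold Rmat
  by_cases h1 : a + b = i + j
  swap
  · rw [if_neg h1, if_neg (show ¬(i + j = a + b) by omega)]; ring
  by_cases h2 : b + c = j + k
  swap
  · rw [if_neg h2, if_neg (show ¬(j + k = b + c) by omega)]; ring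
  rw [if_pos h1, if_pos h2, if_pos h1.symm, if_pos h2.symm]
  rw [sum_reshape j i b (j + b) (by omega), sum_reshape b a j (j + b) (by omega),
    one_mul, one_mul, one_mul, Finset.sum_mul, Finset.sum_mul]
  apply Finset.sum_congr rfl
  intro l _
  by_cases hc : l ≤ j ∧ l ≤ b ∧ b ≤ i + l
  swap
  · rw [if_neg hc, if_neg (by omega), zero_mul, zero_mul]
  obtain ⟨hlj, hlb, hbi⟩ := hc
  rw [if_pos ⟨hlj, hlb, hbi⟩, if_pos ⟨hlb, hlj, by omega⟩]
  have hE : ((i : ℤ) * ((c : ℤ) - (j : ℤ)) + ((k : ℤ) + 1) * (l : ℤ) +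
        ((b - l : ℕ) : ℤ) * (((b - l : ℕ) : ℤ) - (k : ℤ)))
      = ((a : ℤ) * ((k : ℤ) - (b : ℤ)) + ((c : ℤ) + 1) * (l : ℤ) +
        ((j - l : ℕ) : ℤ) * (((j - l : ℕ) : ℤ) - (c : ℤ))) := by
    have hA : (a : ℤ) + b = i + j := by exact_mod_cast h1
    have hB : (b : ℤ) + c = j + k := by exact_mod_cast h2
    rw [Nat.cast_sub hlb, Nat.cast_sub hlj]
    linear_combination ((b : ℤ) - k) * hA + ((i : ℤ) + j - 2 * l) * hB
  rw [hE]
  have hcm : c + (b - l) = k + (j - l) := by omega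
  have him : i - (b - l) = a - (j - l) := by omega
  unfold qbin
  rw [hcm, him]
  field_simp [qp2_ne_zero]
end

section
/- For a fixed pair (γ,δ) of n-TAZRP local states, the set {(α,β) : (γ,δ) ≥ (α,β)} is totally ordered by the relation ≥ (where ≥ means > or equal). -/
open Finset

/-- The relation `(γ,δ) > (α,β)` of the n-TAZRP. -/
def TGt {n : ℕ} (γ δ α β : Fin n → ℕ) : Prop :=
  ∃ l : Fin n, ∃ d : ℕ, 1 ≤ d ∧ d ≤ δ l ∧
    (∀ j, j < l → α j = γ j + δ j ∧ β j = 0) ∧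
    α l = γ l + d ∧ β l = δ l - d ∧
    (∀ j, l < j → α j = γ j ∧ β j = δ j)

/-- If `(γ,δ) > (α,β)` with pivot `(l,d)` and `(γ,δ) > (α',β')` with pivot `(l',d')`
and `(l,d) <lex (l',d')`, then `(α,β) > (α',β')`. -/
lemma TGt_of_lex {n : ℕ} {γ δ α β α' β' : Fin n → ℕ} {l l' : Fin n} {d d' : ℕ}
    (hd1 : 1 ≤ d) (hd2 : d ≤ δ l)
    (hlt : ∀ j, j < l → α j = γ j + δ j ∧ β j = 0)
    (hal : α l = γ l + d) (hbl : β l = δ l - d)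
    (hgt : ∀ j, l < j → α j = γ j ∧ β j = δ j)
    (hd1' : 1 ≤ d') (hd2' : d' ≤ δ l')
    (hlt' : ∀ j, j < l' → α' j = γ j + δ j ∧ β' j = 0)
    (hal' : α' l' = γ l' + d') (hbl' : β' l' = δ l' - d')
    (hgt' : ∀ j, l' < j → α' j = γ j ∧ β' j = δ j)
    (hll : l < l' ∨ (l = l' ∧ d < d')) : TGt α β α' β' := by
  rcases hll with hll | ⟨rfl, hdd⟩
  · refine ⟨l', d', hd1', ?_, ?_, ?_, ?_, ?_⟩
    · rw [(hgt l' hll).2]; exact hd2'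
    · intro j hj
      obtain ⟨ha', hb'⟩ := hlt' j hj
      rcases lt_trichotomy j l with hjl | rfl | hjl
      · obtain ⟨ha, hb⟩ := hlt j hjl; omega
      · omega
      · obtain ⟨ha, hb⟩ := hgt j hjl; omega
    · have := hgt l' hll; omega
    · have := hgt l' hll; omega
    · intro j hj; obtain ⟨ha, hb⟩ := hgt j (hll.trans hj)
      obtain ⟨ha', hb'⟩ := hgt' j hj; omega
  · refine ⟨l, d' - d, by omega, by omega, ?_, by omega, by omega, ?_⟩
    · intro j hj
      obtain ⟨ha', hb'⟩ := hlt' j hj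
      obtain ⟨ha, hb⟩ := hlt j hj; omega
    · intro j hj
      obtain ⟨ha, hb⟩ := hgt j hj
      obtain ⟨ha', hb'⟩ := hgt' j hj; omega

/-- The relation `(γ,δ) ≥ (α,β)`. -/
def TGe {n : ℕ} (γ δ α β : Fin n → ℕ) : Prop :=
  TGt γ δ α β ∨ (α = γ ∧ β = δ)

/-- The set `{(α,β) : (γ,δ) ≥ (α,β)}` is totally ordered by `≥`. -/
theorem TGe_total {n : ℕ} (γ δ α β α' β' : Fin n → ℕ)
    (h : TGe γ δ α β) (h' : TGe γ δ α' β') :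
    TGe α β α' β' ∨ TGe α' β' α β := by
  rcases h with hgt | ⟨rfl, rfl⟩
  · rcases h' with hgt' | ⟨rfl, rfl⟩
    · obtain ⟨l, d, hd1, hd2, hlt, hal, hbl, hg⟩ := hgt
      obtain ⟨l', d', hd1', hd2', hlt', hal', hbl', hg'⟩ := hgt'
      rcases lt_trichotomy l l' with hll | rfl | hll
      · exact Or.inl (Or.inl (TGt_of_lex hd1 hd2 hlt hal hbl hg hd1' hd2' hlt' hal' hbl'
          hg' (Or.inl hll)))
      · rcases lt_trichotomy d d' with hdd | rfl | hdd
        · exact Or.inl (Or.inl (TGt_of_lex hd1 hd2 hlt hal hbl hg hd1' hd2' hlt' hal' hbl'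
            hg' (Or.inr ⟨rfl, hdd⟩)))
        · refine Or.inl (Or.inr ⟨?_, ?_⟩) <;> funext j <;>
            rcases lt_trichotomy j l with hjl | rfl | hjl
          · obtain ⟨ha, hb⟩ := hlt j hjl; obtain ⟨ha', hb'⟩ := hlt' j hjl; omega
          · omega
          · obtain ⟨ha, hb⟩ := hg j hjl; obtain ⟨ha', hb'⟩ := hg' j hjl; omega
          · obtain ⟨ha, hb⟩ := hlt j hjl; obtain ⟨ha', hb'⟩ := hlt' j hjl; omega
          · omega
          · obtain ⟨ha, hb⟩ := hg j hjl; obtain ⟨ha', hb'⟩ := hg' j hjl; omega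
        · exact Or.inr (Or.inl (TGt_of_lex hd1' hd2' hlt' hal' hbl' hg' hd1 hd2 hlt hal hbl
            hg (Or.inr ⟨rfl, hdd⟩)))
      · exact Or.inr (Or.inl (TGt_of_lex hd1' hd2' hlt' hal' hbl' hg' hd1 hd2 hlt hal hbl
          hg (Or.inl hll)))
    · exact Or.inr (Or.inl hgt)
  · exact Or.inl h'
end
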